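/- (Theorem 3.3(b), divergence of the early-warning sign.) Let τ ≥ 0, p* ∈ ℝ and C⁻ > 0. For each p < p*, let A(p), N(p), V(p) be bounded linear operators on a complex Hilbert space H and q(p) ∈ ℝ such that V(p) satisfies the weak Lyapunov equation for (A(p), N(p), q(p), τ); let w(p) ∈ H and λ(p) ∈ ℂ with A(p)† w(p) = conj(λ(p))·w(p) and Re λ(p) < 0. Assume that Re λ(p) → 0 as p → p*⁻, and that |λ(p) − q(p)| ≥ C⁻ and |⟨w(p), N(p) w(p)⟩| ≥ C⁻ for all p < p*. Then |⟨w(p), V(p) w(p)⟩| → ∞ as p → p*⁻. -/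

import Mathlib

/-!
Pairing the weak Lyapunov equation with the adjoint eigenvector `w` on both sides turns every
operator into a scalar: `2 Re λ ⟨w, V w⟩ = -e^{τλ} |λ - q|² ⟨w, N w⟩`. Hence
`|⟨w, V w⟩| ≥ e^{τ Re λ} (C⁻)³ / (2 |Re λ|)`, which blows up as `Re λ → 0⁻` since `e^{τ Re λ} → 1`.
-/

open Filter

local notation "⟪" x ", " y "⟫" => @inner ℂ _ _ x y

/-- A bounded operator `V` satisfies the weak Lyapunov equation for `(A, N, q, τ)` if
`⟨v, A(Vw)⟩ + ⟨v, V(A†w)⟩ = −⟨v, exp(τA)((A − q·I)(N((A† − q·I)w)))⟩` for all `v, w`. -/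
def WeakLyapunov {H : Type*} [NormedAddCommGroup H] [InnerProductSpace ℂ H] [CompleteSpace H]
    (A N V : H →L[ℂ] H) (q τ : ℝ) : Prop :=
  ∀ v w : H,
    ⟪v, A (V w)⟫ + ⟪v, V ((ContinuousLinearMap.adjoint A) w)⟫
      = -⟪v, (NormedSpace.exp ((τ : ℂ) • A))
          ((A - (q : ℂ) • (1 : H →L[ℂ] H))
            (N (((ContinuousLinearMap.adjoint A) - (q : ℂ) • (1 : H →L[ℂ] H)) w)))⟫

open ContinuousLinearMap

theorem ContinuousLinearMap.exp_apply_of_apply_eq_smul {𝕂 E : Type*} [RCLike 𝕂]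
    [NormedAddCommGroup E] [NormedSpace 𝕂 E] [CompleteSpace E]
    {B : E →L[𝕂] E} {c : 𝕂} {x : E} (h : B x = c • x) :
    NormedSpace.exp B x = NormedSpace.exp c • x := by
  have hpow : ∀ n : ℕ, (B ^ n) x = c ^ n • x := by
    intro n
    induction n with
    | zero => simp
    | succ n ih => rw [pow_succ, mul_apply_eq_comp, h, map_smul, ih, smul_smul, ← pow_succ']
  refine ((apply 𝕂 E x).hasSum (NormedSpace.exp_series_hasSum_exp' (𝕂 := 𝕂) B)).unique ?_
  simpa only [apply_apply, smul_apply, hpow, smul_smul, smul_eq_mul]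
    using (NormedSpace.exp_series_hasSum_exp' (𝕂 := 𝕂) c).smul_const x

theorem ContinuousLinearMap.adjoint_exp {𝕜 H : Type*} [RCLike 𝕜] [NormedAddCommGroup H]
    [InnerProductSpace 𝕜 H] [CompleteSpace H] (B : H →L[𝕜] H) :
    adjoint (NormedSpace.exp B) = NormedSpace.exp (adjoint B) := by
  simpa only [star_eq_adjoint] using NormedSpace.star_exp B

theorem ContinuousLinearMap.inner_apply_of_adjoint_apply_eq_smul {𝕜 H : Type*} [RCLike 𝕜]
    [NormedAddCommGroup H] [InnerProductSpace 𝕜 H] [CompleteSpace H]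
    {B : H →L[𝕜] H} {c : 𝕜} {w : H} (h : adjoint B w = (starRingEnd 𝕜) c • w) (x : H) :
    inner 𝕜 w (B x) = c * inner 𝕜 w x := by
  rw [← adjoint_inner_left, h, inner_smul_left, RCLike.conj_conj]

section

variable {H : Type*} [NormedAddCommGroup H] [InnerProductSpace ℂ H] [CompleteSpace H]
  {A N V : H →L[ℂ] H} {q τ : ℝ} {w : H} {lam : ℂ}

theorem WeakLyapunov.two_mul_re_mul_inner_eq (hV : WeakLyapunov A N V q τ)
    (hw : adjoint A w = (starRingEnd ℂ) lam • w) :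
    (2 * lam.re : ℂ) * ⟪w, V w⟫
      = -(Complex.exp (τ * lam) * (lam - q) * (starRingEnd ℂ) (lam - q) * ⟪w, N w⟫) := by
  have hshift : (adjoint A - (q : ℂ) • (1 : H →L[ℂ] H)) w = (starRingEnd ℂ) (lam - q) • w := by
    rw [sub_apply, hw, smul_apply, one_apply_eq_self, map_sub, Complex.conj_ofReal, sub_smul]
  have hshift_adj : adjoint (A - (q : ℂ) • (1 : H →L[ℂ] H)) w
      = (starRingEnd ℂ) (lam - q) • w := by
    rw [← hshift, ← star_eq_adjoint, star_sub, star_smul, star_one, Complex.star_def,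
      Complex.conj_ofReal, star_eq_adjoint]
  have hexp : adjoint (NormedSpace.exp ((τ : ℂ) • A)) w
      = (starRingEnd ℂ) (Complex.exp (τ * lam)) • w := by
    rw [adjoint_exp, ← star_eq_adjoint, star_smul, Complex.star_def, Complex.conj_ofReal,
      star_eq_adjoint, exp_apply_of_apply_eq_smul (c := τ * (starRingEnd ℂ) lam),
      ← Complex.exp_eq_exp_ℂ, ← Complex.exp_conj, map_mul, Complex.conj_ofReal]
    rw [smul_apply, hw, smul_smul]
  have h := hV w w
  rw [inner_apply_of_adjoint_apply_eq_smul hw, inner_apply_of_adjoint_apply_eq_smul hexp,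
    inner_apply_of_adjoint_apply_eq_smul hshift_adj, hshift, hw, map_smul, map_smul,
    inner_smul_right, inner_smul_right] at h
  rw [Complex.re_eq_add_conj]
  linear_combination h

theorem WeakLyapunov.two_mul_abs_re_mul_norm_inner_eq (hV : WeakLyapunov A N V q τ)
    (hw : adjoint A w = (starRingEnd ℂ) lam • w) :
    2 * |lam.re| * ‖⟪w, V w⟫‖ = Real.exp (τ * lam.re) * ‖lam - q‖ ^ 2 * ‖⟪w, N w⟫‖ := by
  have h := congrArg norm (hV.two_mul_re_mul_inner_eq hw)
  simp only [norm_neg, norm_mul, Complex.norm_exp, Complex.norm_conj, Complex.norm_real,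
    Complex.norm_ofNat, Real.norm_eq_abs, Complex.re_ofReal_mul] at h
  linear_combination h

theorem WeakLyapunov.mul_inv_le_norm_inner (hV : WeakLyapunov A N V q τ)
    (hw : adjoint A w = (starRingEnd ℂ) lam • w) (hre : lam.re < 0) {C : ℝ} (hC : 0 ≤ C)
    (hq : C ≤ ‖lam - q‖) (hN : C ≤ ‖⟪w, N w⟫‖) :
    Real.exp (τ * lam.re) * C ^ 3 / 2 * (-lam.re)⁻¹ ≤ ‖⟪w, V w⟫‖ := by
  have h := hV.two_mul_abs_re_mul_norm_inner_eq hw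
  rw [abs_of_neg hre] at h
  have hre' : 0 < -lam.re := neg_pos.2 hre
  calc Real.exp (τ * lam.re) * C ^ 3 / 2 * (-lam.re)⁻¹
      = Real.exp (τ * lam.re) * (C ^ 2 * C) / 2 * (-lam.re)⁻¹ := by ring
    _ ≤ Real.exp (τ * lam.re) * (‖lam - q‖ ^ 2 * ‖⟪w, N w⟫‖) / 2 * (-lam.re)⁻¹ := by gcongr
    _ = ‖⟪w, V w⟫‖ := by
      rw [← mul_assoc, ← h]
      field_simp [hre.ne]

end

theorem autocovariance_divergence_general
    {H : Type*} [NormedAddCommGroup H] [InnerProductSpace ℂ H] [CompleteSpace H]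
    (τ : ℝ) (pstar : ℝ) (Cm : ℝ) (hCm : 0 < Cm)
    (A N V : ℝ → (H →L[ℂ] H)) (q : ℝ → ℝ) (w : ℝ → H) (lam : ℝ → ℂ)
    (hLyap : ∀ p < pstar, WeakLyapunov (A p) (N p) (V p) (q p) τ)
    (heig : ∀ p < pstar,
      (ContinuousLinearMap.adjoint (A p)) (w p) = (starRingEnd ℂ) (lam p) • w p)
    (hre : ∀ p < pstar, (lam p).re < 0)
    (hre0 : Tendsto (fun p => (lam p).re) (nhdsWithin pstar (Set.Iio pstar)) (nhds 0))
    (hq : ∀ p < pstar, Cm ≤ ‖lam p - (q p : ℂ)‖)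
    (hN : ∀ p < pstar, Cm ≤ ‖⟪w p, (N p) (w p)⟫‖) :
    Tendsto (fun p => ‖⟪w p, (V p) (w p)⟫‖) (nhdsWithin pstar (Set.Iio pstar)) atTop := by
  have hinv : Tendsto (fun p => (-(lam p).re)⁻¹) (nhdsWithin pstar (Set.Iio pstar)) atTop := by
    refine Tendsto.inv_tendsto_nhdsGT_zero (tendsto_nhdsWithin_of_tendsto_nhds_of_eventually_within
      _ (by simpa using hre0.neg) ?_)
    filter_upwards [self_mem_nhdsWithin] with p hp using neg_pos.2 (hre p hp)
  have hexp : Tendsto (fun p => Real.exp (τ * (lam p).re) * Cm ^ 3 / 2)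
      (nhdsWithin pstar (Set.Iio pstar)) (nhds (Cm ^ 3 / 2)) := by
    simpa using (((hre0.const_mul τ).rexp).mul_const (Cm ^ 3)).div_const 2
  refine tendsto_atTop_mono' _ ?_ (hexp.pos_mul_atTop (by positivity) hinv)
  filter_upwards [self_mem_nhdsWithin] with p hp
  exact (hLyap p hp).mul_inv_le_norm_inner (heig p hp) (hre p hp) hCm.le (hq p hp) (hN p hp)

/-- (Theorem 3.3(b), divergence of the early-warning sign.)  Along a family
`p ↦ (A(p), N(p), V(p), q(p))` of weak Lyapunov solutions with adjoint eigenvectors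
`A(p)† w(p) = conj(λ(p)) w(p)`, `Re λ(p) < 0`, `Re λ(p) → 0` as `p → p*⁻`, and uniform lower
bounds `|λ(p) − q(p)| ≥ C⁻`, `|⟨w(p), N(p) w(p)⟩| ≥ C⁻`, the quantity
`|⟨w(p), V(p) w(p)⟩|` diverges to `∞` as `p → p*⁻`. -/
theorem autocovariance_divergence
    {H : Type*} [NormedAddCommGroup H] [InnerProductSpace ℂ H] [CompleteSpace H]
    (τ : ℝ) (hτ : 0 ≤ τ) (pstar : ℝ) (Cm : ℝ) (hCm : 0 < Cm)
    (A N V : ℝ → (H →L[ℂ] H)) (q : ℝ → ℝ) (w : ℝ → H) (lam : ℝ → ℂ)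
    (hLyap : ∀ p < pstar, WeakLyapunov (A p) (N p) (V p) (q p) τ)
    (heig : ∀ p < pstar,
      (ContinuousLinearMap.adjoint (A p)) (w p) = (starRingEnd ℂ) (lam p) • w p)
    (hre : ∀ p < pstar, (lam p).re < 0)
    (hre0 : Tendsto (fun p => (lam p).re) (nhdsWithin pstar (Set.Iio pstar)) (nhds 0))
    (hq : ∀ p < pstar, Cm ≤ ‖lam p - (q p : ℂ)‖)
    (hN : ∀ p < pstar, Cm ≤ ‖⟪w p, (N p) (w p)⟫‖) :
    Tendsto (fun p => ‖⟪w p, (V p) (w p)⟫‖) (nhdsWithin pstar (Set.Iio pstar)) atTop :=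
  autocovariance_divergence_general τ pstar Cm hCm A N V q w lam hLyap heig hre hre0 hq hN
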